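/- arXiv:1301.0986 — 2 statements merged into one kernel-verified Lean document; each statement's English description precedes it below -/
import Mathlib

section
/- Let A ∈ ℂ^{m×m} be Hermitian and B ∈ ℂ^{m×n}. There exists a Hermitian matrix X ∈ ℂ^{n×n} with BXB* ⪰ A (i.e., BXB* − A positive semidefinite) if and only if E_B A E_B ⪯ 0 and rank(E_B A E_B) = rank(E_B A), where E_B = I_m − BB†. -/
open Matrix
open scoped ComplexOrder

def IsMoorePenrose {m n : Type*} [Fintype m] [Fintype n]
    (A : Matrix m n ℂ) (X : Matrix n m ℂ) : Prop :=
  A * X * A = A ∧ X * A * X = X ∧ (A * X)ᴴ = A * X ∧ (X * A)ᴴ = X * A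

open Classical in
noncomputable def pinv {m n : Type*} [Fintype m] [Fintype n]
    (A : Matrix m n ℂ) : Matrix n m ℂ :=
  if h : ∃ X, IsMoorePenrose A X then h.choose else 0

/-!
Write `P = BB†` and `E = 1 - P`. Necessity: `E` annihilates `BXB*`, so with `Q = BXB* - A ⪰ 0`
we get `EA = -EQ` and `EAE = -EQE ⪯ 0`; for `Q ⪰ 0` the kernels of `EQE` and `QE` coincide,
which gives the rank identity. Sufficiency: the rank identity says that `EAE` and `EA` have the
same range, so `EAP = DY` for `D = -EAE` and some `Y` with `YP = Y`. Then `H = PAP + Y*DY`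
satisfies `H = PHP`, hence `H = BXB*` for `X = B†H(B†)*`, and `H - A = (1 - Y)* D (1 - Y) ⪰ 0`.
-/

namespace Matrix

section Rank

variable {K : Type*} [Field K] {l m n : Type*} [Fintype n]

theorem rank_eq_of_ker_mulVecLin_eq {M : Matrix l n K} {N : Matrix m n K}
    (h : LinearMap.ker M.mulVecLin = LinearMap.ker N.mulVecLin) : M.rank = N.rank := by
  have hM := LinearMap.finrank_range_add_finrank_ker M.mulVecLin
  have hN := LinearMap.finrank_range_add_finrank_ker N.mulVecLin
  rw [h] at hM
  unfold rank
  omega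

theorem rank_neg (M : Matrix m n K) : (-M).rank = M.rank :=
  rank_eq_of_ker_mulVecLin_eq (by ext; simp)

theorem exists_mul_mul_eq_of_rank_mul_eq [Fintype m] [DecidableEq m] [DecidableEq n]
    {M : Matrix l m K} {N : Matrix m n K} (h : (M * N).rank = M.rank) :
    ∃ Y : Matrix n m K, M * N * Y = M := by
  have hrange : LinearMap.range (M * N).mulVecLin = LinearMap.range M.mulVecLin :=
    Submodule.eq_of_le_of_finrank_eq
      (by rw [mulVecLin_mul]; exact LinearMap.range_comp_le_range _ _) h
  obtain ⟨f, hf⟩ := Module.projective_lifting_property (M * N).mulVecLin.rangeRestrict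
    (M.mulVecLin.codRestrict _ fun x => hrange ▸ LinearMap.mem_range_self _ x)
    (LinearMap.surjective_rangeRestrict _)
  refine ⟨LinearMap.toMatrix' f, toLin'.injective ?_⟩
  refine LinearMap.ext fun x => ?_
  rw [toLin'_apply, toLin'_apply, ← mulVec_mulVec, LinearMap.toMatrix'_mulVec]
  exact congr_arg Subtype.val (LinearMap.congr_fun hf x)

end Rank

variable {𝕜 : Type*} [RCLike 𝕜] {m n : Type*} [Fintype m] [Fintype n]

theorem PosSemidef.rank_conjTranspose_mul_mul {Q : Matrix m m 𝕜} (hQ : Q.PosSemidef)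
    (M : Matrix m n 𝕜) : (Mᴴ * Q * M).rank = (Q * M).rank := by
  refine rank_eq_of_ker_mulVecLin_eq (Submodule.ext fun x => ?_)
  simp only [LinearMap.mem_ker, mulVecLin_apply]
  constructor
  · intro h
    rw [← mulVec_mulVec, ← hQ.dotProduct_mulVec_zero_iff, star_mulVec, ← dotProduct_mulVec,
      mulVec_mulVec, mulVec_mulVec, h, dotProduct_zero]
  · intro h
    rw [Matrix.mul_assoc, ← mulVec_mulVec, h, mulVec_zero]

/-- With `0⁻¹ = 0`, `x ↦ x⁻¹` is the pseudo-inverse of each eigenvalue. -/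
theorem IsHermitian.exists_isHermitian_mul_mul_eq [DecidableEq n] {H : Matrix n n 𝕜}
    (hH : H.IsHermitian) :
    ∃ G : Matrix n n 𝕜, G.IsHermitian ∧ Commute G H ∧ H * G * H = H ∧ G * H * G = G := by
  have hinv : ContinuousOn (·⁻¹ : ℝ → ℝ) (spectrum ℝ H) := H.finite_real_spectrum.continuousOn _
  have hH_selfAdjoint : IsSelfAdjoint H := hH
  refine ⟨cfc (·⁻¹ : ℝ → ℝ) H, cfc_predicate _ _, Commute.cfc_real rfl _, ?_, ?_⟩
  · calc H * cfc (·⁻¹ : ℝ → ℝ) H * H = cfc (fun x : ℝ => x * x⁻¹ * x) H := by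
          rw [cfc_mul .., cfc_mul .., cfc_id' ℝ H]
      _ = H := by simp only [mul_inv_mul_cancel]; exact cfc_id' ℝ H
  · calc cfc (·⁻¹ : ℝ → ℝ) H * H * cfc (·⁻¹ : ℝ → ℝ) H
          = cfc (fun x : ℝ => x⁻¹ * x * x⁻¹) H := by rw [cfc_mul .., cfc_mul .., cfc_id' ℝ H]
      _ = cfc (·⁻¹ : ℝ → ℝ) H := by
          congr 1; funext x; simpa using mul_inv_mul_cancel x⁻¹

theorem posSemidef_add_conjTranspose_mul_mul_sub {R : Type*} [Ring R] [PartialOrder R]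
    [StarRing R] [DecidableEq n] {A P Y : Matrix n n R} (hA : A.IsHermitian) (hP : P.IsHermitian)
    (hD : (-((1 - P) * A * (1 - P))).PosSemidef)
    (hY : -((1 - P) * A * (1 - P)) * Y = (1 - P) * A * P) :
    (P * A * P + Yᴴ * -((1 - P) * A * (1 - P)) * Y - A).PosSemidef := by
  have hYD : Yᴴ * -((1 - P) * A * (1 - P)) = P * A * (1 - P) := by
    rw [← hD.isHermitian.eq, ← conjTranspose_mul, hY]
    simp only [conjTranspose_mul, conjTranspose_sub, conjTranspose_one, hA.eq, hP.eq,
      Matrix.mul_assoc]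
  set D := -((1 - P) * A * (1 - P)) with hD_def
  have hexpand : (1 - Y)ᴴ * D * (1 - Y) = D - D * Y - Yᴴ * D + Yᴴ * D * Y := by
    rw [conjTranspose_sub, conjTranspose_one]
    noncomm_ring
  convert hD.conjTranspose_mul_mul_same (1 - Y) using 1
  rw [hexpand, hY, hYD, hD_def]
  noncomm_ring

end Matrix

theorem exists_isMoorePenrose {m n : Type*} [Fintype m] [Fintype n] (B : Matrix m n ℂ) :
    ∃ X, IsMoorePenrose B X := by
  classical
  obtain ⟨G, hG, hGH, hHGH, hGHG⟩ :=
    (isHermitian_conjTranspose_mul_self B).exists_isHermitian_mul_mul_eq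
  have hBGH : B * (G * (Bᴴ * B)) = B := by
    have h : Bᴴ * B * (G * (Bᴴ * B) - 1) = 0 := by
      rw [Matrix.mul_sub, ← Matrix.mul_assoc, hHGH, Matrix.mul_one, sub_self]
    rwa [conjTranspose_mul_self_mul_eq_zero, Matrix.mul_sub, Matrix.mul_one, sub_eq_zero] at h
  refine ⟨G * Bᴴ, ?_, ?_, ?_, ?_⟩
  · simpa only [Matrix.mul_assoc] using hBGH
  · simpa only [Matrix.mul_assoc] using congr_arg (· * Bᴴ) hGHG
  · simp only [conjTranspose_mul, conjTranspose_conjTranspose, hG.eq, Matrix.mul_assoc]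
  · simp only [conjTranspose_mul, conjTranspose_conjTranspose, hG.eq, Matrix.mul_assoc, hGH.eq]

theorem pinv_isMoorePenrose {m n : Type*} [Fintype m] [Fintype n] (B : Matrix m n ℂ) :
    IsMoorePenrose B (pinv B) := by
  rw [pinv, dif_pos (exists_isMoorePenrose B)]
  exact (exists_isMoorePenrose B).choose_spec

section

variable {𝕜 : Type*} [RCLike 𝕜] {m n : Type*} [Fintype m] [Fintype n]
  {A E : Matrix m m 𝕜} {B : Matrix m n 𝕜}

theorem neg_posSemidef_and_rank_eq_of_posSemidef_sub {X : Matrix n n 𝕜} (hE : E.IsHermitian)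
    (hEB : E * B = 0) (hX : (B * X * Bᴴ - A).PosSemidef) :
    (-(E * A * E)).PosSemidef ∧ (E * A * E).rank = (E * A).rank := by
  set Q := B * X * Bᴴ - A
  have hEA : E * A = -(E * Q) := by
    simp only [Q, Matrix.mul_sub, ← Matrix.mul_assoc, hEB, Matrix.zero_mul, zero_sub, neg_neg]
  have hEAE : E * A * E = -(Eᴴ * Q * E) := by rw [hEA, hE.eq, Matrix.neg_mul]
  refine ⟨by simpa only [hEAE, neg_neg] using hX.conjTranspose_mul_mul_same E, ?_⟩
  rw [hEAE, hEA, rank_neg, rank_neg, hX.rank_conjTranspose_mul_mul, ← rank_conjTranspose,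
    conjTranspose_mul, hX.isHermitian.eq, hE.eq]

theorem exists_posSemidef_sub_of_neg_posSemidef_of_rank_eq [DecidableEq m] {G : Matrix n m 𝕜}
    (hA : A.IsHermitian) (hBGB : B * G * B = B) (hBG : (B * G)ᴴ = B * G)
    (hD : (-((1 - B * G) * A * (1 - B * G))).PosSemidef)
    (hrank : ((1 - B * G) * A * (1 - B * G)).rank = ((1 - B * G) * A).rank) :
    ∃ X : Matrix n n 𝕜, X.IsHermitian ∧ (B * X * Bᴴ - A).PosSemidef := by
  set P := B * G
  have hPP : P * P = P := by rw [← Matrix.mul_assoc, hBGB]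
  obtain ⟨Y₀, hY₀⟩ := exists_mul_mul_eq_of_rank_mul_eq hrank
  set D := -((1 - P) * A * (1 - P))
  set Y := -(Y₀ * P)
  have hY : D * Y = (1 - P) * A * P := by
    simp only [D, Y, neg_mul_neg, ← Matrix.mul_assoc, hY₀]
  have hYP : Y * P = Y := by simp only [Y, Matrix.neg_mul, Matrix.mul_assoc, hPP]
  have hPY : P * Yᴴ = Yᴴ := by rw [← hBG, ← conjTranspose_mul, hYP]
  refine ⟨G * (A + Yᴴ * D * Y) * Gᴴ,
    isHermitian_mul_mul_conjTranspose _ (hA.add (isHermitian_conjTranspose_mul_mul Y hD.1)), ?_⟩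
  have hBXB : B * (G * (A + Yᴴ * D * Y) * Gᴴ) * Bᴴ = P * A * P + Yᴴ * D * Y :=
    calc B * (G * (A + Yᴴ * D * Y) * Gᴴ) * Bᴴ = P * (A + Yᴴ * D * Y) * Pᴴ := by
          simp only [P, conjTranspose_mul, Matrix.mul_assoc]
      _ = P * A * P + P * Yᴴ * D * (Y * P) := by
          rw [hBG]; simp only [Matrix.mul_add, Matrix.add_mul, Matrix.mul_assoc]
      _ = P * A * P + Yᴴ * D * Y := by rw [hPY, hYP]
  rw [hBXB]
  exact posSemidef_add_conjTranspose_mul_mul_sub hA hBG hD hY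

end

theorem lmi_solvability {m n : ℕ} (A : Matrix (Fin m) (Fin m) ℂ)
    (B : Matrix (Fin m) (Fin n) ℂ) (hA : A.IsHermitian) :
    (∃ X : Matrix (Fin n) (Fin n) ℂ, X.IsHermitian ∧ (B * X * Bᴴ - A).PosSemidef) ↔
      ((-((1 - B * pinv B) * A * (1 - B * pinv B))).PosSemidef ∧
        ((1 - B * pinv B) * A * (1 - B * pinv B)).rank = ((1 - B * pinv B) * A).rank) := by
  obtain ⟨hBGB, -, hBG, -⟩ := pinv_isMoorePenrose B
  have hE : (1 - B * pinv B).IsHermitian := isHermitian_one.sub hBG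
  have hEB : (1 - B * pinv B) * B = 0 := by rw [Matrix.sub_mul, Matrix.one_mul, hBGB, sub_self]
  exact ⟨fun ⟨_, _, hX⟩ => neg_posSemidef_and_rank_eq_of_posSemidef_sub hE hEB hX,
    fun ⟨hD, hrank⟩ => exists_posSemidef_sub_of_neg_posSemidef_of_rank_eq hA hBGB hBG hD hrank⟩
end

section
/- Let A ∈ ℂ^{m×m} be Hermitian, B ∈ ℂ^{m×n}, and suppose the inequality BXB* ⪰ A has a Hermitian solution. Then every Hermitian X with BXB* ⪰ A satisfies BXB* ⪰ A − AE_B(E_B A E_B)†E_B A, i.e., A − AE_B(E_B A E_B)†E_B A is the minimum of {BXB* : X Hermitian, BXB* ⪰ A} in the Löwner order, and it is itself attained. -/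
open Matrix
open scoped ComplexOrder

/-!
With `E = 1 - B B†`, every `Y = B X Bᴴ` satisfies `E Y = Y E = 0`. Writing
`shorted D F = D - D F (Fᴴ D F)† Fᴴ D`, this turns the candidate minimum `shorted A E` into
`Y - shorted (Y - A) E`. For `D = Cᴴ C ⪰ 0` one has `D - shorted D F = Cᴴ P C` with `P` the
orthogonal projection onto the range of `C F`, so both `shorted D F` and `D - shorted D F` are
`⪰ 0` and `Fᴴ (shorted D F) = 0`. Applied to `D = B X Bᴴ - A` this gives minimality; applied to a
given solution `X₀` it shows that the candidate `M` is Hermitian with `E M = 0`, hence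
`M = B (B† M B†ᴴ) Bᴴ`.
-/

section MoorePenrose

variable {p q : Type*} [Fintype p] [Fintype q]

theorem IsMoorePenrose.eq {A : Matrix p q ℂ} {X Y : Matrix q p ℂ}
    (hX : IsMoorePenrose A X) (hY : IsMoorePenrose A Y) : X = Y := by
  obtain ⟨hX1, hX2, hX3, hX4⟩ := hX
  obtain ⟨hY1, hY2, hY3, hY4⟩ := hY
  have hAX : A * X = A * Y :=
    calc A * X = (A * Y * A * X)ᴴ := by rw [hY1, hX3]
      _ = (A * X)ᴴ * (A * Y)ᴴ := by rw [Matrix.mul_assoc (A * Y), conjTranspose_mul]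
      _ = A * Y := by rw [hX3, hY3, ← Matrix.mul_assoc, hX1]
  have hXA : X * A = Y * A :=
    calc X * A = (X * (A * Y * A))ᴴ := by rw [hY1, hX4]
      _ = (Y * A)ᴴ * (X * A)ᴴ := by rw [← conjTranspose_mul]; simp only [Matrix.mul_assoc]
      _ = Y * A := by rw [hY4, hX4, Matrix.mul_assoc, ← Matrix.mul_assoc A, hX1]
  calc X = X * (A * X) := by rw [← Matrix.mul_assoc, hX2]
    _ = Y * A * Y := by rw [hAX, ← Matrix.mul_assoc, hXA]
    _ = Y := hY2

theorem IsMoorePenrose.neg {A : Matrix p q ℂ} {X : Matrix q p ℂ} (h : IsMoorePenrose A X) :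
    IsMoorePenrose (-A) (-X) := by
  simpa only [IsMoorePenrose, Matrix.neg_mul, Matrix.mul_neg, neg_neg, neg_inj] using h

theorem IsMoorePenrose.conjTranspose {A : Matrix p q ℂ} {X : Matrix q p ℂ}
    (h : IsMoorePenrose A X) : IsMoorePenrose Aᴴ Xᴴ := by
  obtain ⟨h1, h2, h3, h4⟩ := h
  refine ⟨?_, ?_, ?_, ?_⟩
  · rw [← conjTranspose_mul, ← conjTranspose_mul, ← Matrix.mul_assoc, h1]
  · rw [← conjTranspose_mul, ← conjTranspose_mul, ← Matrix.mul_assoc, h2]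
  · rw [← conjTranspose_mul, h4, h4]
  · rw [← conjTranspose_mul, h3, h3]

theorem Matrix.mul_mul_conjTranspose_mul_self_eq [DecidableEq q] {A : Matrix p q ℂ}
    {G : Matrix q q ℂ} (hG : G.IsHermitian) (h : Aᴴ * A * G * (Aᴴ * A) = Aᴴ * A) :
    A * G * (Aᴴ * A) = A := by
  have hW : (A * (1 - G * (Aᴴ * A)))ᴴ * (A * (1 - G * (Aᴴ * A))) =
      (1 - Aᴴ * A * G) * (Aᴴ * A) * (1 - G * (Aᴴ * A)) := by
    simp only [conjTranspose_mul, conjTranspose_sub, conjTranspose_one,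
      conjTranspose_conjTranspose, hG.eq, Matrix.mul_assoc]
  generalize Aᴴ * A = K at h hW ⊢
  have hzero : (1 - K * G) * K * (1 - G * K) = 0 := by
    rw [show (1 - K * G) * K * (1 - G * K) = (K - K * G * K) * (1 - G * K) by noncomm_ring, h,
      sub_self, Matrix.zero_mul]
  rw [hzero, conjTranspose_mul_self_eq_zero, Matrix.mul_sub, Matrix.mul_one, sub_eq_zero] at hW
  rw [Matrix.mul_assoc, ← hW]

theorem Matrix.IsHermitian.exists_isMoorePenrose [DecidableEq p] {K : Matrix p p ℂ}
    (hK : K.IsHermitian) : ∃ G, IsMoorePenrose K G ∧ G.IsHermitian := by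
  have hcont (f : ℝ → ℝ) : ContinuousOn f (spectrum ℝ K) := K.finite_real_spectrum.continuousOn f
  have hmul (f g : ℝ → ℝ) : cfc f K * cfc g K = cfc (fun x => f x * g x) K :=
    (cfc_mul f g K (hcont f) (hcont g)).symm
  have hsa (f : ℝ → ℝ) : (cfc f K)ᴴ = cfc f K := cfc_predicate f K
  -- `x ↦ x⁻¹` (with `0⁻¹ = 0`) inverts each scalar in the Moore–Penrose sense.
  have hinv (x : ℝ) : x⁻¹ * x * x⁻¹ = x⁻¹ := by simpa using mul_inv_mul_cancel x⁻¹
  have h : IsMoorePenrose (cfc (fun x : ℝ => x) K) (cfc (fun x : ℝ => x⁻¹) K) := by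
    refine ⟨?_, ?_, ?_, ?_⟩ <;> simp only [hmul, hsa, mul_inv_mul_cancel, hinv]
  rw [cfc_id' ℝ K hK.isSelfAdjoint] at h
  exact ⟨_, h, hsa _⟩

theorem exists_isMoorePenrose_s16 [DecidableEq q] (A : Matrix p q ℂ) : ∃ X, IsMoorePenrose A X := by
  have hK := isHermitian_conjTranspose_mul_self A
  obtain ⟨G, ⟨h1, h2, h3, -⟩, hG⟩ := hK.exists_isMoorePenrose
  have hA := mul_mul_conjTranspose_mul_self_eq hG h1
  have hGK : G * (Aᴴ * A) = Aᴴ * A * G := by rw [← h3, conjTranspose_mul, hG.eq, hK.eq]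
  refine ⟨G * Aᴴ, ?_, ?_, ?_, ?_⟩
  · simpa only [Matrix.mul_assoc] using hA
  · rw [show G * Aᴴ * A * (G * Aᴴ) = G * (Aᴴ * A) * G * Aᴴ by simp only [Matrix.mul_assoc], h2]
  · simp only [conjTranspose_mul, conjTranspose_conjTranspose, hG.eq, Matrix.mul_assoc]
  · rw [Matrix.mul_assoc, hGK, h3]

variable [DecidableEq q]

theorem isMoorePenrose_pinv (A : Matrix p q ℂ) : IsMoorePenrose A (pinv A) := by
  have h := exists_isMoorePenrose_s16 A
  rw [pinv, dif_pos h]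
  exact h.choose_spec

theorem IsMoorePenrose.pinv_eq {A : Matrix p q ℂ} {X : Matrix q p ℂ} (h : IsMoorePenrose A X) :
    pinv A = X :=
  (isMoorePenrose_pinv A).eq h

theorem pinv_neg (A : Matrix p q ℂ) : pinv (-A) = -pinv A :=
  (isMoorePenrose_pinv A).neg.pinv_eq

theorem Matrix.IsHermitian.pinv {A : Matrix q q ℂ} (hA : A.IsHermitian) : (pinv A).IsHermitian := by
  have h := (isMoorePenrose_pinv A).conjTranspose
  rw [hA.eq] at h
  exact h.pinv_eq.symm

end MoorePenrose

section RangeProjection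

variable {p q : Type*} [Fintype p] [Fintype q] [DecidableEq q]

theorem Matrix.IsHermitian.posSemidef_of_mul_self_eq {P : Matrix p p ℂ} (hP : P.IsHermitian)
    (hPP : P * P = P) : P.PosSemidef := by
  simpa only [hP.eq, hPP] using posSemidef_self_mul_conjTranspose P

noncomputable def rangeProj (N : Matrix p q ℂ) : Matrix p p ℂ := N * pinv (Nᴴ * N) * Nᴴ

theorem isHermitian_rangeProj (N : Matrix p q ℂ) : (rangeProj N).IsHermitian :=
  isHermitian_mul_mul_conjTranspose N (isHermitian_conjTranspose_mul_self N).pinv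

theorem rangeProj_mul_self (N : Matrix p q ℂ) : rangeProj N * rangeProj N = rangeProj N := by
  obtain ⟨-, h, -, -⟩ := isMoorePenrose_pinv (Nᴴ * N)
  rw [rangeProj, show N * pinv (Nᴴ * N) * Nᴴ * (N * pinv (Nᴴ * N) * Nᴴ) =
    N * (pinv (Nᴴ * N) * (Nᴴ * N) * pinv (Nᴴ * N)) * Nᴴ by simp only [Matrix.mul_assoc], h]

theorem conjTranspose_mul_rangeProj (N : Matrix p q ℂ) : Nᴴ * rangeProj N = Nᴴ := by
  have hK := isHermitian_conjTranspose_mul_self N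
  calc Nᴴ * rangeProj N = (N * pinv (Nᴴ * N) * (Nᴴ * N))ᴴ := by
        simp only [rangeProj, conjTranspose_mul, conjTranspose_conjTranspose, hK.pinv.eq,
          Matrix.mul_assoc]
    _ = Nᴴ := by rw [mul_mul_conjTranspose_mul_self_eq hK.pinv (isMoorePenrose_pinv _).1]

theorem posSemidef_rangeProj (N : Matrix p q ℂ) : (rangeProj N).PosSemidef :=
  (isHermitian_rangeProj N).posSemidef_of_mul_self_eq (rangeProj_mul_self N)

theorem posSemidef_one_sub_rangeProj [DecidableEq p] (N : Matrix p q ℂ) : (1 - rangeProj N).PosSemidef := by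
  refine (isHermitian_one.sub (isHermitian_rangeProj N)).posSemidef_of_mul_self_eq ?_
  rw [Matrix.sub_mul, Matrix.mul_sub, Matrix.mul_sub, rangeProj_mul_self, Matrix.one_mul,
    Matrix.mul_one, Matrix.one_mul, sub_self, sub_zero]

end RangeProjection

open scoped MatrixOrder in
theorem Matrix.PosSemidef.exists_eq_conjTranspose_mul_self {p : Type*} [Fintype p] [DecidableEq p]
    {D : Matrix p p ℂ} (hD : D.PosSemidef) : ∃ C : Matrix p p ℂ, D = Cᴴ * C :=
  ⟨CFC.sqrt D, by rw [(CFC.sqrt_nonneg D).posSemidef.1.eq, CFC.sqrt_mul_sqrt_self D hD.nonneg]⟩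

section Shorted

variable {p q r : Type*} [Fintype p] [Fintype q] [Fintype r]

noncomputable def shorted (D : Matrix p p ℂ) (F : Matrix p q ℂ) : Matrix p p ℂ :=
  D - D * F * pinv (Fᴴ * D * F) * (Fᴴ * D)

theorem shorted_conjTranspose_mul_self [DecidableEq r] (C : Matrix r p ℂ) (F : Matrix p q ℂ) :
    shorted (Cᴴ * C) F = Cᴴ * (1 - rangeProj (C * F)) * C := by
  simp only [shorted, rangeProj, conjTranspose_mul, Matrix.mul_sub, Matrix.sub_mul,
    Matrix.one_mul, Matrix.mul_assoc]

theorem sub_shorted_conjTranspose_mul_self (C : Matrix r p ℂ) (F : Matrix p q ℂ) :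
    Cᴴ * C - shorted (Cᴴ * C) F = Cᴴ * rangeProj (C * F) * C := by
  simp only [shorted, rangeProj, conjTranspose_mul, sub_sub_cancel, Matrix.mul_assoc]

variable [DecidableEq q]

theorem shorted_sub {Y : Matrix p p ℂ} (A : Matrix p p ℂ) {F : Matrix p q ℂ}
    (hFY : Fᴴ * Y = 0) (hYF : Y * F = 0) : shorted (Y - A) F = Y - shorted A F := by
  have hpinv : pinv (Fᴴ * (Y - A) * F) = -pinv (Fᴴ * A * F) := by
    rw [Matrix.mul_sub, hFY, zero_sub, Matrix.neg_mul, pinv_neg]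
  rw [shorted, shorted, hpinv]
  simp only [Matrix.mul_sub, Matrix.sub_mul, hFY, hYF, zero_sub, Matrix.neg_mul, Matrix.mul_neg,
    neg_neg]
  abel

variable [DecidableEq p]

theorem posSemidef_shorted {D : Matrix p p ℂ} (hD : D.PosSemidef) (F : Matrix p q ℂ) :
    (shorted D F).PosSemidef := by
  obtain ⟨C, rfl⟩ := hD.exists_eq_conjTranspose_mul_self
  rw [shorted_conjTranspose_mul_self]
  exact (posSemidef_one_sub_rangeProj _).conjTranspose_mul_mul_same C

theorem posSemidef_sub_shorted {D : Matrix p p ℂ} (hD : D.PosSemidef) (F : Matrix p q ℂ) :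
    (D - shorted D F).PosSemidef := by
  obtain ⟨C, rfl⟩ := hD.exists_eq_conjTranspose_mul_self
  rw [sub_shorted_conjTranspose_mul_self]
  exact (posSemidef_rangeProj _).conjTranspose_mul_mul_same C

theorem conjTranspose_mul_shorted {D : Matrix p p ℂ} (hD : D.PosSemidef) (F : Matrix p q ℂ) :
    Fᴴ * shorted D F = 0 := by
  obtain ⟨C, rfl⟩ := hD.exists_eq_conjTranspose_mul_self
  rw [shorted_conjTranspose_mul_self, ← Matrix.mul_assoc, ← Matrix.mul_assoc, ← conjTranspose_mul,
    Matrix.mul_sub, Matrix.mul_one, conjTranspose_mul_rangeProj, sub_self, Matrix.zero_mul]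

end Shorted

section Congruence

variable {p q : Type*} [Fintype p] [Fintype q] [DecidableEq p] [DecidableEq q]

theorem conjTranspose_one_sub_mul_pinv (B : Matrix p q ℂ) :
    (1 - B * pinv B)ᴴ = 1 - B * pinv B := by
  rw [conjTranspose_sub, conjTranspose_one, (isMoorePenrose_pinv B).2.2.1]

theorem one_sub_mul_pinv_mul (B : Matrix p q ℂ) : (1 - B * pinv B) * B = 0 := by
  rw [Matrix.sub_mul, Matrix.one_mul, (isMoorePenrose_pinv B).1, sub_self]

theorem mul_pinv_mul_mul_conjTranspose {M : Matrix p p ℂ} (hM : M.IsHermitian) (B : Matrix p q ℂ)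
    (hBM : (1 - B * pinv B) * M = 0) : B * (pinv B * M * (pinv B)ᴴ) * Bᴴ = M := by
  have hleft : B * pinv B * M = M := by
    rwa [Matrix.sub_mul, Matrix.one_mul, sub_eq_zero, eq_comm] at hBM
  have hright : M * (B * pinv B) = M := by
    simpa only [conjTranspose_mul, hM.eq, (isMoorePenrose_pinv B).2.2.1] using
      congrArg conjTranspose hleft
  calc B * (pinv B * M * (pinv B)ᴴ) * Bᴴ = B * pinv B * M * (B * pinv B)ᴴ := by
        simp only [conjTranspose_mul, Matrix.mul_assoc]
    _ = M := by rw [(isMoorePenrose_pinv B).2.2.1, hleft, hright]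

end Congruence

theorem lmi_min_matrix_general {m n : ℕ} (A : Matrix (Fin m) (Fin m) ℂ)
    (B : Matrix (Fin m) (Fin n) ℂ)
    (hcons : ∃ X : Matrix (Fin n) (Fin n) ℂ, X.IsHermitian ∧ (B * X * Bᴴ - A).PosSemidef) :
    (∃ X : Matrix (Fin n) (Fin n) ℂ, X.IsHermitian ∧ (B * X * Bᴴ - A).PosSemidef ∧
      B * X * Bᴴ = A - A * (1 - B * pinv B) *
        pinv ((1 - B * pinv B) * A * (1 - B * pinv B)) * ((1 - B * pinv B) * A)) ∧
    (∀ X : Matrix (Fin n) (Fin n) ℂ, X.IsHermitian → (B * X * Bᴴ - A).PosSemidef →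
      (B * X * Bᴴ - (A - A * (1 - B * pinv B) *
        pinv ((1 - B * pinv B) * A * (1 - B * pinv B)) * ((1 - B * pinv B) * A))).PosSemidef) := by
  have hE := conjTranspose_one_sub_mul_pinv B
  set E := 1 - B * pinv B
  have hEY (X : Matrix (Fin n) (Fin n) ℂ) : E * (B * X * Bᴴ) = 0 := by
    rw [← Matrix.mul_assoc, ← Matrix.mul_assoc, one_sub_mul_pinv_mul, Matrix.zero_mul,
      Matrix.zero_mul]
  have hYE (X : Matrix (Fin n) (Fin n) ℂ) : B * X * Bᴴ * E = 0 := by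
    simpa only [conjTranspose_mul, conjTranspose_conjTranspose, conjTranspose_zero, hE,
      Matrix.mul_assoc] using congrArg conjTranspose (hEY Xᴴ)
  have hshort (X : Matrix (Fin n) (Fin n) ℂ) :
      B * X * Bᴴ - shorted A E = shorted (B * X * Bᴴ - A) E :=
    (shorted_sub A (by rw [hE]; exact hEY X) (hYE X)).symm
  rw [show A - A * E * pinv (E * A * E) * (E * A) = shorted A E by rw [shorted, hE]]
  obtain ⟨X₀, hX₀, hD₀⟩ := hcons
  have hM : shorted A E = B * X₀ * Bᴴ - shorted (B * X₀ * Bᴴ - A) E := by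
    rw [← hshort, sub_sub_cancel]
  have hMh : (shorted A E).IsHermitian := hM ▸
    (isHermitian_mul_mul_conjTranspose B hX₀).sub (posSemidef_shorted hD₀ E).isHermitian
  have hEM : E * shorted A E = 0 := by
    have h := conjTranspose_mul_shorted hD₀ E
    rw [hE] at h
    rw [hM, Matrix.mul_sub, hEY, h, sub_zero]
  have hBM := mul_pinv_mul_mul_conjTranspose hMh B hEM
  refine ⟨⟨_, isHermitian_mul_mul_conjTranspose _ hMh, ?_, hBM⟩, fun X _ hX => ?_⟩
  · rw [hBM, hM, sub_right_comm]
    exact posSemidef_sub_shorted hD₀ E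
  · rw [hshort]
    exact posSemidef_shorted hX E

theorem lmi_min_matrix {m n : ℕ} (A : Matrix (Fin m) (Fin m) ℂ)
    (B : Matrix (Fin m) (Fin n) ℂ) (hA : A.IsHermitian)
    (hcons : ∃ X : Matrix (Fin n) (Fin n) ℂ, X.IsHermitian ∧ (B * X * Bᴴ - A).PosSemidef) :
    (∃ X : Matrix (Fin n) (Fin n) ℂ, X.IsHermitian ∧ (B * X * Bᴴ - A).PosSemidef ∧
      B * X * Bᴴ = A - A * (1 - B * pinv B) *
        pinv ((1 - B * pinv B) * A * (1 - B * pinv B)) * ((1 - B * pinv B) * A)) ∧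
    (∀ X : Matrix (Fin n) (Fin n) ℂ, X.IsHermitian → (B * X * Bᴴ - A).PosSemidef →
      (B * X * Bᴴ - (A - A * (1 - B * pinv B) *
        pinv ((1 - B * pinv B) * A * (1 - B * pinv B)) * ((1 - B * pinv B) * A))).PosSemidef) :=
  lmi_min_matrix_general A B hcons
end
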